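/- arXiv:2310.14787 — 2 statements merged into one kernel-verified Lean document; each statement's English description precedes it below -/
import Mathlib

section
/- The moment matrix A_n(a) with (i,j)-entry ∫_{(i−1)/2^n}^{i/2^n} (t − a)^{j−1} dt (1 ≤ i,j ≤ 2^n) is invertible for every real a. -/
open MeasureTheory intervalIntegral Finset

theorem moment_matrix_invertible (n : ℕ) (a : ℝ) :
    IsUnit (Matrix.of fun i j : Fin (2 ^ n) =>
      ∫ t in (((i : ℕ) : ℝ) / 2 ^ n)..((((i : ℕ) : ℝ) + 1) / 2 ^ n), (t - a) ^ (j : ℕ)) := by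
  set N := 2 ^ n with hN
  set h : ℝ := 1 / 2 ^ n with hh
  have hne : h ≠ 0 := by positivity
  set x : Fin N → ℝ := fun i => (i : ℝ) / 2 ^ n - a with hx
  set C : Matrix (Fin N) (Fin N) ℝ := Matrix.of fun k j =>
    if (k : ℕ) ≤ (j : ℕ) then
      (((j : ℕ) + 1).choose (k : ℕ) : ℝ) * h ^ ((j : ℕ) + 1 - (k : ℕ)) / ((j : ℕ) + 1)
    else 0 with hC
  have entry : ∀ i j : Fin N,
      (∫ t in (((i : ℕ) : ℝ) / 2 ^ n)..((((i : ℕ) : ℝ) + 1) / 2 ^ n), (t - a) ^ (j : ℕ))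
        = ((x i + h) ^ ((j : ℕ) + 1) - x i ^ ((j : ℕ) + 1)) / (((j : ℕ) : ℝ) + 1) := by
    intro i j
    rw [intervalIntegral.integral_comp_sub_right (fun t => t ^ (j : ℕ)) a, integral_pow]
    have : (((i : ℕ) : ℝ) + 1) / 2 ^ n - a = x i + h := by
      simp only [hx, hh]; ring
    rw [this]
  have key : ∀ (u : ℝ) (j : Fin N),
      (∑ k : Fin N, u ^ (k : ℕ) * C k j)
        = ((u + h) ^ ((j : ℕ) + 1) - u ^ ((j : ℕ) + 1)) / (((j : ℕ) : ℝ) + 1) := by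
    intro u j
    have hjN : (j : ℕ) + 1 ≤ N := j.2
    have hstep : (∑ k : Fin N, u ^ (k : ℕ) * C k j)
        = ∑ k ∈ range N, (u ^ k *
            (if k ≤ (j : ℕ) then
              ((((j : ℕ) + 1).choose k : ℝ) * h ^ ((j : ℕ) + 1 - k) / ((j : ℕ) + 1))
            else 0)) := by
      rw [← Fin.sum_univ_eq_sum_range]
      rfl
    rw [hstep]
    rw [← Finset.sum_subset (Finset.range_subset_range.2 hjN) (fun k _ hk => by
      simp only [Finset.mem_range, Nat.lt_succ_iff, not_le] at hk
      rw [if_neg (by omega), mul_zero])]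
    have hbin : (u + h) ^ ((j : ℕ) + 1)
        = ∑ k ∈ range ((j : ℕ) + 2), u ^ k * h ^ ((j : ℕ) + 1 - k) *
            ((((j : ℕ) + 1).choose k : ℝ)) := by
      rw [add_pow]
    rw [Finset.sum_range_succ] at hbin
    simp only [Nat.sub_self, pow_zero, Nat.choose_self, Nat.cast_one, mul_one] at hbin
    have : (u + h) ^ ((j : ℕ) + 1) - u ^ ((j : ℕ) + 1)
        = ∑ k ∈ range ((j : ℕ) + 1), u ^ k * h ^ ((j : ℕ) + 1 - k) *
            ((((j : ℕ) + 1).choose k : ℝ)) := by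
      rw [hbin]; ring
    rw [this, Finset.sum_div]
    apply Finset.sum_congr rfl
    intro k hk
    rw [Finset.mem_range, Nat.lt_succ_iff] at hk
    rw [if_pos hk]
    ring
  have hM : (Matrix.of fun i j : Fin N =>
      ∫ t in (((i : ℕ) : ℝ) / 2 ^ n)..((((i : ℕ) : ℝ) + 1) / 2 ^ n), (t - a) ^ (j : ℕ))
      = (Matrix.vandermonde x) * C := by
    ext i j
    rw [Matrix.mul_apply]
    simp only [Matrix.vandermonde_apply, Matrix.of_apply]
    rw [entry i j, ← key (x i) j]
  rw [Matrix.isUnit_iff_isUnit_det, hM, Matrix.det_mul, isUnit_iff_ne_zero]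
  apply mul_ne_zero
  · rw [Matrix.det_vandermonde]
    apply Finset.prod_ne_zero_iff.2
    intro i _
    apply Finset.prod_ne_zero_iff.2
    intro j hj
    rw [Finset.mem_Ioi] at hj
    have : (i : ℝ) < (j : ℝ) := by exact_mod_cast hj
    have : x i < x j := by
      simp only [hx]
      have hp : (0:ℝ) < 2 ^ n := by positivity
      gcongr
    exact sub_ne_zero.2 (ne_of_gt this)
  · have htri : C.BlockTriangular id := by
      intro i j hij
      simp only [id] at hij
      exact if_neg (by omega)
    rw [Matrix.det_of_upperTriangular htri]
    apply Finset.prod_ne_zero_iff.2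
    intro j _
    simp only [hC, Matrix.of_apply, if_pos le_rfl]
    have h1 : (j : ℕ) + 1 - (j : ℕ) = 1 := by omega
    rw [h1, Nat.choose_succ_self_right, pow_one]
    have : ((j : ℕ) : ℝ) + 1 > 0 := by positivity
    push_cast
    rw [mul_div_cancel_left₀ _ (ne_of_gt this)]
    exact hne
end

section
/- Uniqueness from block averages: if p and q are polynomials in two variables of degree < N = 2^n in each variable and ∫_R p = ∫_R q for every dyadic square R of side 2^{-n} in [0,1]^2, then p = q. -/
/-!
The block integrals of `∑ c α β * x ^ α * y ^ β` form the matrix `A * c * Aᵀ`, where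
`A i α = ∫ x in I i, x ^ α` is the moment matrix of the dyadic intervals `I i`. This matrix is
invertible: if `A *ᵥ v = 0`, then the antiderivative `F = ∑ v α * x ^ (α + 1) / (α + 1)` of
`∑ v α * x ^ α` takes the same value at all `N + 1` endpoints, so `F`, of degree at most `N`, is
constant, which forces `v = 0`.
-/

open MeasureTheory Set Matrix

section

open Polynomial

variable {N : ℕ} (v : Fin N → ℝ)

noncomputable def antiderivOfCoeffs : ℝ[X] :=
  ∑ α : Fin N, C (v α / ((α : ℕ) + 1)) * X ^ ((α : ℕ) + 1)

theorem eval_antiderivOfCoeffs (x : ℝ) :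
    (antiderivOfCoeffs v).eval x = ∑ α : Fin N, v α / ((α : ℕ) + 1) * x ^ ((α : ℕ) + 1) := by
  simp [antiderivOfCoeffs, eval_finsetSum]

theorem natDegree_antiderivOfCoeffs_le : (antiderivOfCoeffs v).natDegree ≤ N :=
  natDegree_sum_le_of_forall_le _ _ fun α _ =>
    (natDegree_C_mul_X_pow_le _ _).trans α.isLt

theorem coeff_antiderivOfCoeffs_succ (α : Fin N) :
    (antiderivOfCoeffs v).coeff ((α : ℕ) + 1) = v α / ((α : ℕ) + 1) := by
  simp [antiderivOfCoeffs, coeff_X_pow, Fin.val_inj]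

theorem eq_zero_of_eval_antiderivOfCoeffs_eq {t : Fin (N + 1) → ℝ} (ht : Function.Injective t)
    (h : ∀ k, (antiderivOfCoeffs v).eval (t k) = (antiderivOfCoeffs v).eval (t 0)) : v = 0 := by
  have hconst : antiderivOfCoeffs v = C ((antiderivOfCoeffs v).eval (t 0)) :=
    eq_of_natDegree_lt_card_of_eval_eq _ _ ht (by simpa using h)
      (by simpa using Nat.lt_succ_of_le (natDegree_antiderivOfCoeffs_le v))
  funext α
  have hcoeff := coeff_antiderivOfCoeffs_succ v α
  rw [hconst, coeff_C_succ, eq_comm, div_eq_zero_iff] at hcoeff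
  exact hcoeff.resolve_right (by positivity)

end

noncomputable def momentMatrix {ι : Type*} (I : ι → Set ℝ) (N : ℕ) : Matrix ι (Fin N) ℝ :=
  Matrix.of fun i α => ∫ x in I i, x ^ (α : ℕ)

theorem setIntegral_Icc_pow {a b : ℝ} (hab : a ≤ b) (k : ℕ) :
    ∫ x in Icc a b, x ^ k = (b ^ (k + 1) - a ^ (k + 1)) / (k + 1) := by
  rw [integral_Icc_eq_integral_Ioc, ← intervalIntegral.integral_of_le hab, integral_pow]

theorem momentMatrix_Icc_mulVec {N : ℕ} {t : ℕ → ℝ} (ht : Monotone t) (v : Fin N → ℝ)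
    (i : Fin N) :
    (momentMatrix (fun i : Fin N => Icc (t i) (t (i + 1))) N *ᵥ v) i =
      (antiderivOfCoeffs v).eval (t (i + 1)) - (antiderivOfCoeffs v).eval (t i) := by
  simp only [mulVec, dotProduct, momentMatrix, of_apply,
    setIntegral_Icc_pow (ht (Nat.le_succ _)), eval_antiderivOfCoeffs, ← Finset.sum_sub_distrib]
  exact Finset.sum_congr rfl fun α _ => by ring

theorem isUnit_momentMatrix_Icc {N : ℕ} {t : ℕ → ℝ} (ht : StrictMono t) :
    IsUnit (momentMatrix (fun i : Fin N => Icc (t i) (t (i + 1))) N) := by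
  rw [← mulVec_injective_iff_isUnit]
  show Function.Injective (mulVecLin _)
  refine (injective_iff_map_eq_zero _).2 fun v hv => ?_
  have hstep (i : Fin N) :
      (antiderivOfCoeffs v).eval (t (i + 1)) = (antiderivOfCoeffs v).eval (t i) := by
    rw [← sub_eq_zero, ← momentMatrix_Icc_mulVec ht.monotone]
    exact congrFun hv i
  have hconst : ∀ k ≤ N, (antiderivOfCoeffs v).eval (t k) = (antiderivOfCoeffs v).eval (t 0) := by
    intro k hk
    induction k with
    | zero => rfl
    | succ k ih => rw [← ih (by omega), hstep ⟨k, hk⟩]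
  exact eq_zero_of_eval_antiderivOfCoeffs_eq v (ht.injective.comp Fin.val_injective)
    fun k => hconst k (Nat.lt_succ_iff.mp k.isLt)

theorem setIntegral_prod_sum_coeff_mul_pow {S T : Set ℝ} (hS : IsCompact S) (hT : IsCompact T)
    {N : ℕ} (e : Matrix (Fin N) (Fin N) ℝ) :
    ∫ z in S ×ˢ T, ∑ α : Fin N, ∑ β : Fin N, e α β * z.1 ^ (α : ℕ) * z.2 ^ (β : ℕ) =
      ∑ α : Fin N, ∑ β : Fin N, e α β * (∫ x in S, x ^ (α : ℕ)) * ∫ y in T, y ^ (β : ℕ) := by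
  have hint (α β : Fin N) : IntegrableOn
      (fun z : ℝ × ℝ => e α β * z.1 ^ (α : ℕ) * z.2 ^ (β : ℕ)) (S ×ˢ T) :=
    (by fun_prop : Continuous _).continuousOn.integrableOn_compact (hS.prod hT)
  rw [integral_finsetSum _ fun α _ => integrable_finsetSum _ fun β _ => hint α β]
  refine Finset.sum_congr rfl fun α _ => ?_
  rw [integral_finsetSum _ fun β _ => hint α β]
  refine Finset.sum_congr rfl fun β _ => ?_
  rw [Measure.volume_eq_prod]
  exact (setIntegral_prod_mul (μ := volume) (ν := volume) (fun x => e α β * x ^ (α : ℕ))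
    (fun y => y ^ (β : ℕ)) S T).trans (by rw [integral_const_mul])

theorem setIntegral_prod_eq_momentMatrix_mul {ι κ : Type*} {I : ι → Set ℝ} {J : κ → Set ℝ}
    (hI : ∀ i, IsCompact (I i)) (hJ : ∀ j, IsCompact (J j)) {N : ℕ}
    (e : Matrix (Fin N) (Fin N) ℝ) (i : ι) (j : κ) :
    ∫ z in I i ×ˢ J j, ∑ α : Fin N, ∑ β : Fin N, e α β * z.1 ^ (α : ℕ) * z.2 ^ (β : ℕ) =
      (momentMatrix I N * e * (momentMatrix J N)ᵀ) i j := by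
  simp only [setIntegral_prod_sum_coeff_mul_pow (hI i) (hJ j), mul_apply, transpose_apply,
    momentMatrix, of_apply, Finset.sum_mul]
  rw [Finset.sum_comm]
  exact Finset.sum_congr rfl fun α _ => Finset.sum_congr rfl fun β _ => by ring

theorem block_average_uniqueness (n : ℕ)
    (c d : Matrix (Fin (2 ^ n)) (Fin (2 ^ n)) ℝ)
    (g gn : ℝ × ℝ → ℝ)
    (hgdef : ∀ z, g z =
      ∑ α : Fin (2 ^ n), ∑ β : Fin (2 ^ n), d α β * z.1 ^ (α : ℕ) * z.2 ^ (β : ℕ))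
    (hgndef : ∀ z, gn z =
      ∑ α : Fin (2 ^ n), ∑ β : Fin (2 ^ n), c α β * z.1 ^ (α : ℕ) * z.2 ^ (β : ℕ))
    (hblocks : ∀ i j : Fin (2 ^ n),
      (∫ z in (Set.Icc (((i : ℕ) : ℝ) / 2 ^ n) ((((i : ℕ) : ℝ) + 1) / 2 ^ n)) ×ˢ
              (Set.Icc (((j : ℕ) : ℝ) / 2 ^ n) ((((j : ℕ) : ℝ) + 1) / 2 ^ n)), gn z)
        = ∫ z in (Set.Icc (((i : ℕ) : ℝ) / 2 ^ n) ((((i : ℕ) : ℝ) + 1) / 2 ^ n)) ×ˢ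
                 (Set.Icc (((j : ℕ) : ℝ) / 2 ^ n) ((((j : ℕ) : ℝ) + 1) / 2 ^ n)), g z) :
    c = d := by
  set I : Fin (2 ^ n) → Set ℝ := fun i => Icc (((i : ℕ) : ℝ) / 2 ^ n) ((((i : ℕ) : ℝ) + 1) / 2 ^ n)
  have hI : ∀ i, IsCompact (I i) := fun i => isCompact_Icc
  have hA : IsUnit (momentMatrix I (2 ^ n)) := by
    have ht : StrictMono fun k : ℕ => (k : ℝ) / 2 ^ n :=
      Nat.strictMono_cast.div_const (by positivity)
    convert isUnit_momentMatrix_Icc ht using 4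
    push_cast
    rfl
  have hmoments : momentMatrix I _ * c * (momentMatrix I _)ᵀ =
      momentMatrix I _ * d * (momentMatrix I _)ᵀ := by
    ext i j
    rw [← setIntegral_prod_eq_momentMatrix_mul hI hI, ← setIntegral_prod_eq_momentMatrix_mul hI hI]
    simpa only [hgdef, hgndef] using hblocks i j
  exact hA.mul_left_cancel (((isUnit_transpose _).2 hA).mul_right_cancel hmoments)
end
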